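/- arXiv:1705.01189 — 3 statements merged into one kernel-verified Lean document; each statement's English description precedes it below -/
import Mathlib

section
/- Consider the planar linear system ẋ = Λx with Λ = [[σ, ω], [−ω, σ]] where σ < 0 and ω ≠ 0. Let the template rows be a_k = (cos ψ_k, sin ψ_k) for ψ_k = 2kπ/m, k = 1,…,m. If tan(π/m) < |σ/ω|, then the polytope P = {x : a_k·x ≤ 1 for all k} is invariant for the flow: at any boundary point x with a_k·x = 1 and a_j·x ≤ 1 for all j, the vector field points inward, i.e., a_k·(Λx) < 0. -/
/-!
On the face `a_k · x = 1` write `x = a_k + t a_k^⊥`. The neighbouring rows `a_{k±1}`, at angle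
`±2π/m` from `a_k`, give `cos (2π/m) ± t sin (2π/m) ≤ 1`, i.e. `|t| ≤ tan (π/m)`. Since
`a_k · Λx = σ + ω t`, the hypothesis `tan (π/m) |ω| < |σ| = -σ` makes this negative.
-/

open Real

theorem Function.Periodic.exists_apply_two_mul_nat_mul_pi_div_eq {α : Type*} {g : ℝ → α}
    (hg : Function.Periodic g (2 * π)) {m : ℕ} (hm : 0 < m) (j : ℤ) :
    ∃ i : ℕ, 1 ≤ i ∧ i ≤ m ∧ g (2 * i * π / m) = g (2 * j * π / m) := by
  have hm' : (0 : ℤ) < m := by exact_mod_cast hm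
  have hlo := Int.emod_nonneg (j - 1) hm'.ne'
  have hhi := Int.emod_lt_of_pos (j - 1) hm'
  have hdiv := Int.emod_add_mul_ediv (j - 1) m
  obtain ⟨r, hr1, hrm, hj⟩ : ∃ r : ℕ, 1 ≤ r ∧ r ≤ m ∧ j = r + m * ((j - 1) / m) :=
    ⟨((j - 1) % m + 1).toNat, by omega, by omega, by omega⟩
  refine ⟨r, hr1, hrm, ?_⟩
  have hmR : (m : ℝ) ≠ 0 := by positivity
  rw [hj, ← hg.int_mul ((j - 1) / m) (2 * r * π / m)]
  congr 1
  push_cast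
  field_simp

theorem cos_add_mul_add_sin_add_mul (ψ δ x₁ x₂ : ℝ) :
    cos (ψ + δ) * x₁ + sin (ψ + δ) * x₂ =
      cos δ * (cos ψ * x₁ + sin ψ * x₂) + sin δ * (cos ψ * x₂ - sin ψ * x₁) := by
  rw [cos_add, sin_add]
  ring

theorem le_tan_of_cos_two_mul_add_sin_two_mul_mul_le_one {ν t : ℝ} (hν₀ : 0 < ν)
    (hν : ν < π / 2) (h : cos (2 * ν) + sin (2 * ν) * t ≤ 1) : t ≤ tan ν := by
  have hsin : 0 < sin ν := sin_pos_of_pos_of_lt_pi hν₀ (by linarith [pi_pos])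
  have hcos : 0 < cos ν := cos_pos_of_mem_Ioo ⟨by linarith, hν⟩
  rw [cos_two_mul', sin_two_mul, ← sin_sq_add_cos_sq ν] at h
  rw [tan_eq_sin_div_cos, le_div_iff₀ hcos]
  nlinarith

theorem abs_le_tan_of_rows_add_sub_two_mul_le_one {ψ ν x₁ x₂ : ℝ} (hν₀ : 0 < ν)
    (hν : ν < π / 2) (hx : cos ψ * x₁ + sin ψ * x₂ = 1)
    (hnext : cos (ψ + 2 * ν) * x₁ + sin (ψ + 2 * ν) * x₂ ≤ 1)
    (hprev : cos (ψ - 2 * ν) * x₁ + sin (ψ - 2 * ν) * x₂ ≤ 1) :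
    |cos ψ * x₂ - sin ψ * x₁| ≤ tan ν := by
  rw [cos_add_mul_add_sin_add_mul, hx, mul_one] at hnext
  rw [sub_eq_add_neg, cos_add_mul_add_sin_add_mul, hx, mul_one, cos_neg, sin_neg, neg_mul,
    ← mul_neg] at hprev
  exact abs_le.mpr ⟨neg_le.mp (le_tan_of_cos_two_mul_add_sin_two_mul_mul_le_one hν₀ hν hprev),
    le_tan_of_cos_two_mul_add_sin_two_mul_mul_le_one hν₀ hν hnext⟩

theorem pi_div_natCast_lt_pi_div_two {m : ℕ} (hm : 2 < m) : π / m < π / 2 :=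
  div_lt_div_of_pos_left pi_pos two_pos (by exact_mod_cast hm)

theorem mul_abs_lt_abs_of_lt_abs_div {a b c : ℝ} (hb : b ≠ 0) (h : c < |b / a|) :
    c * |a| < |b| := by
  rcases eq_or_ne a 0 with rfl | ha
  · simpa using hb
  · rwa [abs_div, lt_div_iff₀ (abs_pos.mpr ha)] at h

open Real in
theorem polygon_template_invariant_general (σ ω : ℝ) (hσ : σ < 0)
    (m : ℕ) (hm : 3 ≤ m) (htan : tan (π / m) < |σ / ω|) :
    ∀ k : ℕ, 1 ≤ k → k ≤ m →
      ∀ x₁ x₂ : ℝ,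
        cos (2 * k * π / m) * x₁ + sin (2 * k * π / m) * x₂ = 1 →
        (∀ j : ℕ, 1 ≤ j → j ≤ m →
          cos (2 * j * π / m) * x₁ + sin (2 * j * π / m) * x₂ ≤ 1) →
        cos (2 * k * π / m) * (σ * x₁ + ω * x₂) +
          sin (2 * k * π / m) * (-ω * x₁ + σ * x₂) < 0 := by
  intro k _ _ x₁ x₂ hx hall
  -- rows indexed by `ℤ`, so that rows `0 = m` and `m + 1 = 1` serve as neighbours
  have hrow (j : ℤ) : cos (2 * j * π / m) * x₁ + sin (2 * j * π / m) * x₂ ≤ 1 := by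
    have hper : Function.Periodic (fun θ ↦ cos θ * x₁ + sin θ * x₂) (2 * π) :=
      fun θ ↦ by simp
    obtain ⟨i, hi₁, him, hi⟩ :=
      hper.exists_apply_two_mul_nat_mul_pi_div_eq (m := m) (by omega) j
    exact hi ▸ hall i hi₁ him
  have hnext := hrow (k + 1)
  have hprev := hrow (k - 1)
  rw [show 2 * ((k + 1 : ℤ) : ℝ) * π / m = 2 * k * π / m + 2 * (π / m) by push_cast; ring]
    at hnext
  rw [show 2 * ((k - 1 : ℤ) : ℝ) * π / m = 2 * k * π / m - 2 * (π / m) by push_cast; ring]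
    at hprev
  have ht := abs_le_tan_of_rows_add_sub_two_mul_le_one (by positivity)
    (pi_div_natCast_lt_pi_div_two hm) hx hnext hprev
  calc _ = σ + ω * (cos (2 * k * π / m) * x₂ - sin (2 * k * π / m) * x₁) := by
        linear_combination σ * hx
    _ ≤ σ + |ω| * tan (π / m) := by grw [← ht, ← abs_mul, ← le_abs_self]
    _ < σ + |σ| := by linarith [mul_abs_lt_abs_of_lt_abs_div hσ.ne htan]
    _ = 0 := by rw [abs_of_neg hσ]; ring

open Real in
theorem polygon_template_invariant (σ ω : ℝ) (hσ : σ < 0) (hω : ω ≠ 0)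
    (m : ℕ) (hm : 3 ≤ m) (htan : tan (π / m) < |σ / ω|) :
    ∀ k : ℕ, 1 ≤ k → k ≤ m →
      ∀ x₁ x₂ : ℝ,
        cos (2 * k * π / m) * x₁ + sin (2 * k * π / m) * x₂ = 1 →
        (∀ j : ℕ, 1 ≤ j → j ≤ m →
          cos (2 * j * π / m) * x₁ + sin (2 * j * π / m) * x₂ ≤ 1) →
        cos (2 * k * π / m) * (σ * x₁ + ω * x₂) +
          sin (2 * k * π / m) * (-ω * x₁ + σ * x₂) < 0 :=
  polygon_template_invariant_general σ ω hσ m hm htan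
end

section
/- Let f : ℝⁿ → ℝⁿ be continuously differentiable and P = {x : A x ≤ b} a compact polytope containing a point x_eq with f(x_eq) = 0 in its interior. If for every i and every x on the face {x ∈ P : A_i x = b_i} we have A_i·f(x) < 0, then P is forward invariant for ẋ = f(x): any solution starting in P remains in P for all t ≥ 0. -/
/-!
A trajectory that is in `P` at time `s` stays in `P` for a short while after `s`: an inactive
constraint `A i ⬝ᵥ x < b i` persists by continuity, and an active one `A i ⬝ᵥ x = b i` has
strictly negative time derivative `A i ⬝ᵥ f x`, so it becomes strict immediately after `s`.
Since `P` is closed, this local forward invariance propagates along `[0, t]` by real induction.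
-/

open Set Filter Topology Matrix

theorem HasDerivAt.eventually_lt_nhdsGT_of_neg {g : ℝ → ℝ} {g' s : ℝ} (hg : HasDerivAt g g' s)
    (hneg : g' < 0) : ∀ᶠ u in 𝓝[>] s, g u < g s := by
  have hslope : ∀ᶠ u in 𝓝[>] s, slope g s u < 0 :=
    ((hasDerivAt_iff_tendsto_slope.mp hg).eventually_lt_const hneg).filter_mono
      (nhdsWithin_mono s fun _ hu => ne_of_gt hu)
  filter_upwards [hslope, self_mem_nhdsWithin] with u hu hsu
  rw [slope_def_field, div_neg_iff] at hu
  rcases hu with ⟨-, hden⟩ | ⟨hnum, -⟩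
  · exact absurd hsu (not_lt.mpr (sub_neg.mp hden).le)
  · exact sub_neg.mp hnum

theorem HasDerivAt.eventually_le_nhdsGT {g : ℝ → ℝ} {g' c s : ℝ} (hg : HasDerivAt g g' s)
    (hle : g s ≤ c) (hactive : g s = c → g' < 0) : ∀ᶠ u in 𝓝[>] s, g u ≤ c := by
  rcases hle.lt_or_eq with hlt | heq
  · exact ((hg.continuousAt.eventually_lt_const hlt).filter_mono nhdsWithin_le_nhds).mono
      fun _ hu => hu.le
  · exact (hg.eventually_lt_nhdsGT_of_neg (hactive heq)).mono fun _ hu => heq ▸ hu.le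

theorem HasDerivAt.dotProduct_const_left {𝕜 ι : Type*} [NontriviallyNormedField 𝕜] [Fintype ι]
    {x : 𝕜 → ι → 𝕜} {x' : ι → 𝕜} {t : 𝕜} (v : ι → 𝕜) (hx : HasDerivAt x x' t) :
    HasDerivAt (fun s => v ⬝ᵥ x s) (v ⬝ᵥ x') t := by
  simpa only [dotProduct] using
    HasDerivAt.fun_sum fun j _ => (hasDerivAt_pi.mp hx j).const_mul (v j)

theorem isClosed_setOf_forall_dotProduct_le {ι κ : Type*} [Fintype κ] (A : ι → κ → ℝ)
    (b : ι → ℝ) : IsClosed {x : κ → ℝ | ∀ i, A i ⬝ᵥ x ≤ b i} := by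
  simp only [ofPred_forall]
  exact isClosed_iInter fun i =>
    isClosed_le (continuous_const.dotProduct continuous_id) continuous_const

theorem IsClosed.mapsTo_Ici_of_eventually_mem_nhdsGT {X : Type*} [TopologicalSpace X]
    {S : Set X} (hS : IsClosed S) {γ : ℝ → X} (hγ : Continuous γ) {a : ℝ} (ha : γ a ∈ S)
    (hloc : ∀ s ≥ a, γ s ∈ S → ∀ᶠ u in 𝓝[>] s, γ u ∈ S) : MapsTo γ (Ici a) S := by
  intro t (ht : a ≤ t)
  have hsub : Icc a t ⊆ γ ⁻¹' S :=
    ((hS.preimage hγ).inter isClosed_Icc).Icc_subset_of_forall_mem_nhdsWithin ha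
      fun s hs => hloc s hs.2.1 hs.1
  exact hsub ⟨ht, le_rfl⟩

open Matrix in
theorem polytope_forward_invariant_general (n m : ℕ)
    (A : Fin m → (Fin n → ℝ)) (b : Fin m → ℝ)
    (f : (Fin n → ℝ) → (Fin n → ℝ))
    (hin : ∀ i, ∀ x ∈ {x : Fin n → ℝ | ∀ i, A i ⬝ᵥ x ≤ b i},
      A i ⬝ᵥ x = b i → A i ⬝ᵥ f x < 0) :
    ∀ x : ℝ → (Fin n → ℝ), (∀ t, HasDerivAt x (f (x t)) t) →
      (∀ i, A i ⬝ᵥ x 0 ≤ b i) → ∀ t ≥ 0, ∀ i, A i ⬝ᵥ x t ≤ b i := by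
  intro x hx hx0 t ht
  have hcont : Continuous x := continuous_iff_continuousAt.mpr fun s => (hx s).continuousAt
  have hstay (s : ℝ) (hs : ∀ i, A i ⬝ᵥ x s ≤ b i) : ∀ᶠ u in 𝓝[>] s, ∀ i, A i ⬝ᵥ x u ≤ b i :=
    eventually_all.mpr fun i =>
      ((hx s).dotProduct_const_left (A i)).eventually_le_nhdsGT (hs i) (hin i (x s) hs)
  exact (isClosed_setOf_forall_dotProduct_le A b).mapsTo_Ici_of_eventually_mem_nhdsGT hcont hx0
    (fun s _ => hstay s) ht

open Matrix in
theorem polytope_forward_invariant (n m : ℕ)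
    (A : Fin m → (Fin n → ℝ)) (b : Fin m → ℝ)
    (f : (Fin n → ℝ) → (Fin n → ℝ)) (hf : ContDiff ℝ 1 f)
    (hcomp : IsCompact {x : Fin n → ℝ | ∀ i, A i ⬝ᵥ x ≤ b i})
    (xeq : Fin n → ℝ) (heq : f xeq = 0)
    (hint : xeq ∈ interior {x : Fin n → ℝ | ∀ i, A i ⬝ᵥ x ≤ b i})
    (hin : ∀ i, ∀ x ∈ {x : Fin n → ℝ | ∀ i, A i ⬝ᵥ x ≤ b i},
      A i ⬝ᵥ x = b i → A i ⬝ᵥ f x < 0) :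
    ∀ x : ℝ → (Fin n → ℝ), (∀ t, HasDerivAt x (f (x t)) t) →
      (∀ i, A i ⬝ᵥ x 0 ≤ b i) → ∀ t ≥ 0, ∀ i, A i ⬝ᵥ x t ≤ b i :=
  polytope_forward_invariant_general n m A b f hin
end

section
/- Let Λ = [[σ, ω], [−ω, σ]] with σ < 0, ω > 0, and tan(π/m) < −σ/ω for an integer m ≥ 3. Then for every unit vector a = (cos ψ, sin ψ) and every x ∈ ℝ² on the boundary piece where a·x = r and ‖x‖ ≤ r/cos(π/m) for some r > 0, we have a·(Λx) ≤ r·(σ + ω·tan(π/m)) < 0. -/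
/-!
Write `a = (cos ψ, sin ψ)` and `θ = π / m`. Since `Λ = σ I + ω J` with `J` the rotation by `-π/2`,
`a·(Λx) = σ (a·x) + ω (a × x) = σ r + ω (a × x)`. Pythagoras gives `(a × x)² = ‖x‖² - r²`, and
`‖x‖ ≤ r / cos θ` bounds this by `r² / cos² θ - r² = (r tan θ)²`. Finally `tan θ < -σ/ω` makes
`σ + ω tan θ` negative.
-/

open Real

lemma cross_sq_eq_sq_add_sq_sub_inner_sq {c s : ℝ} (hcs : c ^ 2 + s ^ 2 = 1) (x₁ x₂ : ℝ) :
    (c * x₂ - s * x₁) ^ 2 = x₁ ^ 2 + x₂ ^ 2 - (c * x₁ + s * x₂) ^ 2 := by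
  linear_combination (x₁ ^ 2 + x₂ ^ 2) * hcs

lemma cross_le_sqrt_of_inner_eq_of_sqrt_le {c s x₁ x₂ r R : ℝ} (hcs : c ^ 2 + s ^ 2 = 1)
    (hx : c * x₁ + s * x₂ = r) (hR : √(x₁ ^ 2 + x₂ ^ 2) ≤ R) :
    c * x₂ - s * x₁ ≤ √(R ^ 2 - r ^ 2) := by
  have hnorm : x₁ ^ 2 + x₂ ^ 2 ≤ R ^ 2 := (sqrt_le_iff.mp hR).2
  refine (le_abs_self _).trans (abs_le_sqrt ?_)
  rw [cross_sq_eq_sq_add_sq_sub_inner_sq hcs, hx]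
  linarith

lemma sqrt_div_cos_sq_sub_sq {θ r : ℝ} (hcos : 0 < cos θ) (htan : 0 ≤ tan θ) (hr : 0 ≤ r) :
    √((r / cos θ) ^ 2 - r ^ 2) = r * tan θ := by
  have hsec : (cos θ ^ 2)⁻¹ = 1 + tan θ ^ 2 := by
    rw [← inv_one_add_tan_sq hcos.ne', inv_inv]
  rw [div_pow, div_eq_mul_inv, hsec, ← sqrt_sq (mul_nonneg hr htan)]
  ring_nf

lemma pi_div_natCast_mem_Ioo {m : ℕ} (hm : 2 < m) : π / m ∈ Set.Ioo 0 (π / 2) := by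
  have hm' : (2 : ℝ) < m := by exact_mod_cast hm
  exact ⟨by positivity, div_lt_div_of_pos_left pi_pos two_pos hm'⟩

open Real in
theorem key_invariance_inequality_general (σ ω : ℝ) (m : ℕ) (hω : 0 < ω)
    (hm : 3 ≤ m) (htan : tan (π / m) < -σ / ω) :
    ∀ ψ r x₁ x₂ : ℝ, 0 < r →
      cos ψ * x₁ + sin ψ * x₂ = r →
      Real.sqrt (x₁ ^ 2 + x₂ ^ 2) ≤ r / cos (π / m) →
      cos ψ * (σ * x₁ + ω * x₂) + sin ψ * (-ω * x₁ + σ * x₂)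
          ≤ r * (σ + ω * tan (π / m)) ∧
        r * (σ + ω * tan (π / m)) < 0 := by
  intro ψ r x₁ x₂ hr hplane hnorm
  obtain ⟨hθ0, hθ⟩ := pi_div_natCast_mem_Ioo hm
  have hcross : cos ψ * x₂ - sin ψ * x₁ ≤ r * tan (π / m) := by
    rw [← sqrt_div_cos_sq_sub_sq (cos_pos_of_mem_Ioo ⟨by linarith, hθ⟩)
      (tan_pos_of_pos_of_lt_pi_div_two hθ0 hθ).le hr.le]
    exact cross_le_sqrt_of_inner_eq_of_sqrt_le (by rw [add_comm, sin_sq_add_cos_sq]) hplane hnorm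
  have hωtan : ω * tan (π / m) < -σ := by
    rw [mul_comm]; exact (lt_div_iff₀ hω).mp htan
  refine ⟨?_, mul_neg_of_pos_of_neg hr (by linarith)⟩
  calc cos ψ * (σ * x₁ + ω * x₂) + sin ψ * (-ω * x₁ + σ * x₂)
      = σ * (cos ψ * x₁ + sin ψ * x₂) + ω * (cos ψ * x₂ - sin ψ * x₁) := by ring
    _ ≤ σ * r + ω * (r * tan (π / m)) := by rw [hplane]; gcongr
    _ = r * (σ + ω * tan (π / m)) := by ring

open Real in
theorem key_invariance_inequality (σ ω : ℝ) (m : ℕ) (hσ : σ < 0) (hω : 0 < ω)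
    (hm : 3 ≤ m) (htan : tan (π / m) < -σ / ω) :
    ∀ ψ r x₁ x₂ : ℝ, 0 < r →
      cos ψ * x₁ + sin ψ * x₂ = r →
      Real.sqrt (x₁ ^ 2 + x₂ ^ 2) ≤ r / cos (π / m) →
      cos ψ * (σ * x₁ + ω * x₂) + sin ψ * (-ω * x₁ + σ * x₂)
          ≤ r * (σ + ω * tan (π / m)) ∧
        r * (σ + ω * tan (π / m)) < 0 :=
  key_invariance_inequality_general σ ω m hω hm htan
end
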